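/- For all real ω₁, ω₂: (1/54)(2+cos ω₁)(2+cos ω₂)(5+cos(ω₁+ω₂)) = |(1/(24√6))(1+√3+(−1+√3)e^{iω₁})(1+√3+(−1+√3)e^{iω₂})(2+√6+(−2+√6)e^{i(ω₁+ω₂)})|². -/

import Mathlib

/-! Each factor has the form `(k + √c) + (√c - k) e^{iω}`, whose squared modulus is
`2(c + k²) + 2(c - k²) cos ω`; with `(k, c) = (1, 3)` and `(2, 6)` this is `4(2 + cos ω)` and
`4(5 + cos ω)`, and the prefactor contributes `1/3456 = (1/54)/4³`. -/

open Complex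

lemma norm_sq_ofReal_add_ofReal_mul_exp (a b ω : ℝ) :
    ‖(a : ℂ) + b * exp (I * ω)‖ ^ 2 = a ^ 2 + b ^ 2 + 2 * a * b * Real.cos ω := by
  rw [mul_comm I, exp_mul_I, Complex.sq_norm, normSq_apply]
  simp only [add_re, add_im, mul_re, mul_im, ofReal_re, ofReal_im, I_re, I_im, cos_ofReal_re,
    sin_ofReal_re, cos_ofReal_im, sin_ofReal_im]
  linear_combination b ^ 2 * Real.sin_sq_add_cos_sq ω

lemma norm_sq_add_sqrt_add_sub_sqrt_mul_exp (k c ω : ℝ) (hc : 0 ≤ c) :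
    ‖(k : ℂ) + √c + (-k + √c) * exp (I * ω)‖ ^ 2 = 2 * (c + k ^ 2) + 2 * (c - k ^ 2) * Real.cos ω := by
  have h := norm_sq_ofReal_add_ofReal_mul_exp (k + √c) (-k + √c) ω
  push_cast at h
  rw [h]
  linear_combination (2 + 2 * Real.cos ω) * Real.sq_sqrt hc

lemma norm_sq_ofReal_inv_mul_sqrt (m c : ℝ) (hc : 0 ≤ c) :
    ‖((1 / (m * √c) : ℝ) : ℂ)‖ ^ 2 = 1 / (m ^ 2 * c) := by
  rw [norm_real, Real.norm_eq_abs, sq_abs, div_pow, mul_pow, Real.sq_sqrt hc, one_pow]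

open Complex in
/-- The explicit Fejér–Riesz (single square) factorization of the reciprocal of the
vanishing moment recovery function `S` for the box spline with direction matrix
`[I I e]` in two dimensions:
`(1/54)(2+cos ω₁)(2+cos ω₂)(5+cos(ω₁+ω₂)) = |(1/(24√6))(1+√3+(−1+√3)e^{iω₁})(1+√3+(−1+√3)e^{iω₂})(2+√6+(−2+√6)e^{i(ω₁+ω₂)})|²`. -/
theorem fejer_riesz_factorization_boxspline (ω₁ ω₂ : ℝ) :
    (1 / 54) * (2 + Real.cos ω₁) * (2 + Real.cos ω₂) * (5 + Real.cos (ω₁ + ω₂))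
      = ‖(((1 / (24 * Real.sqrt 6) : ℝ) : ℂ)
            * (1 + (Real.sqrt 3 : ℂ) + (-1 + (Real.sqrt 3 : ℂ)) * Complex.exp (Complex.I * (ω₁ : ℂ)))
            * (1 + (Real.sqrt 3 : ℂ) + (-1 + (Real.sqrt 3 : ℂ)) * Complex.exp (Complex.I * (ω₂ : ℂ)))
            * (2 + (Real.sqrt 6 : ℂ) + (-2 + (Real.sqrt 6 : ℂ))
                * Complex.exp (Complex.I * ((ω₁ : ℂ) + (ω₂ : ℂ)))))‖ ^ 2 := by
  have h₁ := norm_sq_add_sqrt_add_sub_sqrt_mul_exp 1 3 ω₁ (by norm_num)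
  have h₂ := norm_sq_add_sqrt_add_sub_sqrt_mul_exp 1 3 ω₂ (by norm_num)
  have h₃ := norm_sq_add_sqrt_add_sub_sqrt_mul_exp 2 6 (ω₁ + ω₂) (by norm_num)
  push_cast at h₁ h₂ h₃
  rw [norm_mul, norm_mul, norm_mul, mul_pow, mul_pow, mul_pow, h₁, h₂, h₃,
    norm_sq_ofReal_inv_mul_sqrt 24 6 (by norm_num)]
  ring
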